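/- arXiv:1509.01165 — 3 statements merged into one kernel-verified Lean document; each statement's English description precedes it below -/
import Mathlib

section
/- Let S be a left Ore domain with division ring of fractions Q, and let C ⊆ Q be a division subring such that the left C-submodule C·S of Q generated by products c·s (c ∈ C, s ∈ S) is finite dimensional as a left C-vector space. Then C·S = Q. -/
/-!
Right multiplication by a nonzero `s ∈ S` is an injective `C`-linear endomorphism of the
finite-dimensional space `C·S`, hence surjective, so `w * s = 1` for some `w ∈ C·S`; that is,
`s⁻¹ ∈ C·S`. As `C·S` is stable under right multiplication by `S`, every left fraction
`g⁻¹ * f` then lies in `C·S`.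
-/

namespace Submodule

section Semiring

variable {R A : Type*} [Semiring R] [Semiring A] [Module R A] [IsScalarTower R A A]

theorem mul_mem_span_of_mem {S : Submonoid A} {v t : A} (hv : v ∈ span R (S : Set A))
    (ht : t ∈ S) : v * t ∈ span R (S : Set A) :=
  have hle : span R (S : Set A) ≤ (span R (S : Set A)).comap (LinearMap.mulRight R t) :=
    span_le.2 fun _ hx ↦ subset_span (S.mul_mem hx ht)
  hle hv

end Semiring

section DivisionRing

variable {K Q : Type*} [DivisionRing K] [DivisionRing Q] [Module K Q] [IsScalarTower K Q Q]

theorem inv_mem_span_of_finite {S : Submonoid Q}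
    [Module.Finite K (span K (S : Set Q))] {s : Q} (hs : s ∈ S) (hs0 : s ≠ 0) :
    s⁻¹ ∈ span K (S : Set Q) := by
  set V := span K (S : Set Q)
  let f : V →ₗ[K] V := (LinearMap.mulRight K s).restrict fun _ hv ↦ mul_mem_span_of_mem hv hs
  have hf : Function.Injective f := fun x y hxy ↦
    Subtype.ext <| mul_right_cancel₀ hs0 (congrArg Subtype.val hxy)
  obtain ⟨w, hw⟩ := LinearMap.injective_iff_surjective.mp hf ⟨1, subset_span S.one_mem⟩
  have hws : (w : Q) * s = 1 := congrArg Subtype.val hw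
  exact eq_inv_of_mul_eq_one_left hws ▸ w.2

theorem span_eq_top_of_finite_of_forall_eq_inv_mul {S : Submonoid Q}
    [Module.Finite K (span K (S : Set Q))]
    (hfrac : ∀ q : Q, ∃ f ∈ S, ∃ g ∈ S, g ≠ 0 ∧ q = g⁻¹ * f) :
    span K (S : Set Q) = ⊤ := by
  refine eq_top_iff.2 fun q _ ↦ ?_
  obtain ⟨f, hf, g, hg, hg0, rfl⟩ := hfrac q
  exact mul_mem_span_of_mem (inv_mem_span_of_finite hg hg0) hf

end DivisionRing

end Submodule

abbrev Subring.divisionRingOfInvMem {Q : Type*} [DivisionRing Q] (C : Subring Q)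
    (hC : ∀ c ∈ C, c⁻¹ ∈ C) : DivisionRing C :=
  { (inferInstance : Ring C) with
    inv := fun c ↦ ⟨(c : Q)⁻¹, hC c c.2⟩
    mul_inv_cancel := fun _ ha ↦ Subtype.ext <| mul_inv_cancel₀ fun h ↦ ha (Subtype.ext h)
    inv_zero := Subtype.ext inv_zero
    qsmul := _
    nnqsmul := _ }

theorem stmt0_general (Q : Type*) [DivisionRing Q] (S C : Subring Q)
    (hfrac : ∀ q : Q, ∃ f ∈ S, ∃ g ∈ S, g ≠ 0 ∧ q = g⁻¹ * f)
    (hC : ∀ c ∈ C, c⁻¹ ∈ C)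
    (hfin : Module.Finite C (Submodule.span C (S : Set Q))) :
    Submodule.span C (S : Set Q) = ⊤ :=
  letI := C.divisionRingOfInvMem hC
  Submodule.span_eq_top_of_finite_of_forall_eq_inv_mul (S := S.toSubmonoid) hfrac

/-- Lemma (locali1), first part: let `S` be a left Ore domain with division ring of
fractions `Q` (encoded: `Q` is a division ring, `S` a subring such that every element of
`Q` is a left fraction `g⁻¹ * f` with `f, g ∈ S`, `g ≠ 0`), and let `C ⊆ Q` be a division
subring (a subring closed under inverses).  If the left `C`-span `C·S` of `S` in `Q` is
finite dimensional over `C`, then `C·S = Q`. -/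
theorem stmt0 (Q : Type*) [DivisionRing Q] (S C : Subring Q)
    (hdom : ∀ a b : Q, a ∈ S → b ∈ S → a * b = 0 → a = 0 ∨ b = 0)
    (hfrac : ∀ q : Q, ∃ f ∈ S, ∃ g ∈ S, g ≠ 0 ∧ q = g⁻¹ * f)
    (hC : ∀ c ∈ C, c⁻¹ ∈ C)
    (hfin : Module.Finite C (Submodule.span C (S : Set Q))) :
    Submodule.span C (S : Set Q) = ⊤ :=
  stmt0_general Q S C hfrac hC hfin
end

section
/- Let Z be a finitely generated field extension of an algebraically closed field F of characteristic p > 0. Then the intersection over all m ≥ 0 of the subfields Z^{p^m} = {z^{p^m} : z ∈ Z} equals F. -/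
/-!
Elements of `F` are `pᵐ`-th powers for every `m` since `F` is algebraically closed. Conversely,
an element `z ∉ F` is transcendental, so it lies in a transcendence basis `B`, and `Z` is finite
of some degree `N` over `L = F(B)`. If `z = w ^ p ^ N`, then `w` is purely inseparable over `L`,
so its minimal polynomial is `X ^ p ^ n - y` with `p ^ n ≤ N < p ^ N`; hence
`w ^ p ^ (N - 1) ∈ L` is a `p`-th root of `z` in `L`. But a variable of the rational function
field `L` is not a `p`-th power there, by counting its multiplicity in numerator and denominator.
-/

open Module Polynomial

theorem Prime.pow_ne_mul_pow {α : Type*} [CommMonoidWithZero α] [IsCancelMulZero α]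
    [WfDvdMonoid α] {q : α} (hq : Prime q) {n : ℕ} (hn : 1 < n) {s : α} (hs : s ≠ 0)
    (r : α) : r ^ n ≠ q * s ^ n := by
  intro h
  have hr : r ≠ 0 := by
    rintro rfl
    exact mul_ne_zero hq.ne_zero (pow_ne_zero n hs) (by rw [← h, zero_pow (by omega)])
  have hfin {a : α} (ha : a ≠ 0) : emultiplicity q a = multiplicity q a :=
    (FiniteMultiplicity.of_not_isUnit hq.not_isUnit ha).emultiplicity_eq_multiplicity
  have hmult := congrArg (emultiplicity q) h
  rw [emultiplicity_pow hq, emultiplicity_mul hq, emultiplicity_pow hq, hfin hr, hfin hs,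
    hfin hq.ne_zero, multiplicity_self] at hmult
  have hmod := congrArg (· % n) (show n * multiplicity q r = 1 + n * multiplicity q s by
    exact_mod_cast hmult)
  simp only [Nat.mul_mod_right, Nat.add_mul_mod_self_left, Nat.mod_eq_of_lt hn] at hmod
  exact zero_ne_one hmod

theorem AlgebraicIndependent.pow_ne_of_mem_adjoin {ι F K : Type*} [Field F] [Field K]
    [Algebra F K] {x : ι → K} (hx : AlgebraicIndependent F x) (i : ι) {n : ℕ} (hn : 1 < n)
    {v : K} (hv : v ∈ IntermediateField.adjoin F (Set.range x)) : v ^ n ≠ x i := by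
  intro hvn
  have hinj : Function.Injective (MvPolynomial.aeval x : MvPolynomial ι F →ₐ[F] K) :=
    algebraicIndependent_iff_injective_aeval.mp hx
  obtain ⟨r, s, rfl⟩ := (IntermediateField.mem_adjoin_range_iff F x v).1 hv
  have hs : MvPolynomial.aeval x s ≠ 0 := by
    intro hs
    rw [hs, div_zero, zero_pow (by omega)] at hvn
    exact MvPolynomial.X_ne_zero (R := F) i (hinj (by simp [← hvn]))
  have hs' : s ≠ 0 := fun h => hs (by rw [h, map_zero])
  refine (MvPolynomial.X_prime (R := F) (i := i)).pow_ne_mul_pow hn hs' r (hinj ?_)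
  rw [map_pow, map_mul, map_pow, MvPolynomial.aeval_X, ← hvn, div_pow,
    div_mul_cancel₀ _ (pow_ne_zero n hs)]


theorem IntermediateField.finiteDimensional_of_adjoin_finset_eq_top {K L : Type*} [Field K]
    [Field L] [Algebra K L] [Algebra.IsAlgebraic K L] {s : Finset L}
    (hs : IntermediateField.adjoin K (s : Set L) = ⊤) : FiniteDimensional K L := by
  have := IntermediateField.finiteDimensional_adjoin (K := K) (S := (s : Set L))
    fun x _ => (Algebra.IsAlgebraic.isAlgebraic x).isIntegral
  rw [hs] at this
  exact IntermediateField.topEquiv.toLinearEquiv.finiteDimensional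

theorem pow_pow_finrank_sub_one_mem_range {K L : Type*} [Field K] [Field L] [Algebra K L]
    [FiniteDimensional K L] {p : ℕ} [Fact p.Prime] [ExpChar K p] {w : L} {m : ℕ}
    (hw : w ^ p ^ m ∈ (algebraMap K L).range) :
    w ^ p ^ (finrank K L - 1) ∈ (algebraMap K L).range := by
  have hp : 1 < p := (Fact.out : p.Prime).one_lt
  obtain ⟨n, y, hmin⟩ := (minpoly.natSepDegree_eq_one_iff_eq_X_pow_sub_C p).1
    ((minpoly.natSepDegree_eq_one_iff_pow_mem p).2 ⟨m, hw⟩)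
  have hdeg : p ^ n ≤ finrank K L := by
    simpa [hmin, natDegree_X_pow_sub_C] using minpoly.natDegree_le (A := K) w
  have hn : n ≤ finrank K L - 1 := by
    have := hdeg.trans_lt (Nat.lt_pow_self hp)
    have := (Nat.pow_lt_pow_iff_right hp).1 this
    omega
  have hwn : w ^ p ^ n = algebraMap K L y := by
    simpa [hmin, sub_eq_zero] using minpoly.aeval K w
  rw [← Nat.sub_add_cancel hn, pow_add, mul_comm, pow_mul, hwn, ← map_pow]
  exact RingHom.mem_range_self _ _

theorem IsAlgClosed.transcendental_of_notMem_range {F K : Type*} [Field F] [IsAlgClosed F]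
    [Field K] [Algebra F K] {z : K} (hz : z ∉ Set.range (algebraMap F K)) : Transcendental F z :=
  fun halg => hz <| minpoly.mem_range_of_degree_eq_one F z
    (IsAlgClosed.degree_eq_one_of_irreducible F (minpoly.irreducible halg.isIntegral))

theorem Transcendental.exists_isTranscendenceBasis_mem {F K : Type*} [Field F] [Field K]
    [Algebra F K] {z : K} (hz : Transcendental F z) :
    ∃ B : Set K, z ∈ B ∧ IsTranscendenceBasis F ((↑) : B → K) := by
  obtain ⟨B, hzB, hB⟩ := exists_isTranscendenceBasis_superset (R := F) (s := {z})
    (algebraicIndependent_unique_type_iff.2 hz)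
  exact ⟨B, hzB rfl, hB⟩

/-- Let `Z` be a finitely generated field extension of an algebraically closed field `F` of
characteristic `p > 0`.  Then `⋂ₘ Z^{pᵐ} = F`: the intersection over all `m ≥ 0` of the
subfields of `pᵐ`-th powers of `Z` is exactly (the image of) `F`. -/
theorem stmt5 (F Z : Type*) [Field F] [Field Z] [Algebra F Z] [IsAlgClosed F]
    (p : ℕ) [Fact p.Prime] [CharP Z p]
    (hfg : ∃ s : Finset Z, IntermediateField.adjoin F (s : Set Z) = ⊤) :
    (⋂ m : ℕ, Set.range fun z : Z => z ^ p ^ m) = Set.range (algebraMap F Z) := by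
  refine Set.Subset.antisymm (fun z hz => ?_) ?_
  · by_contra hzF
    obtain ⟨B, hzB, hB⟩ :=
      (IsAlgClosed.transcendental_of_notMem_range hzF).exists_isTranscendenceBasis_mem
    set L := IntermediateField.adjoin F (Set.range ((↑) : B → Z))
    have := hB.isAlgebraic_field
    obtain ⟨s, hs⟩ := hfg
    have : FiniteDimensional L Z := IntermediateField.finiteDimensional_of_adjoin_finset_eq_top
      (IntermediateField.adjoin_eq_top_of_adjoin_eq_top F hs)
    have : ExpChar L p := ExpChar.prime Fact.out
    have hzL : z ∈ (algebraMap L Z).range :=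
      ⟨⟨z, IntermediateField.subset_adjoin F _ ⟨⟨z, hzB⟩, rfl⟩⟩, rfl⟩
    obtain ⟨w, hw : w ^ p ^ finrank L Z = z⟩ := Set.mem_iInter.1 hz (finrank L Z)
    obtain ⟨v, hv⟩ := pow_pow_finrank_sub_one_mem_range (w := w) (m := finrank L Z) (hw ▸ hzL)
    refine hB.1.pow_ne_of_mem_adjoin ⟨z, hzB⟩ (Fact.out : p.Prime).one_lt v.2 ?_
    rw [show (v : Z) = algebraMap L Z v from rfl, hv, ← pow_mul, ← pow_succ,
      Nat.sub_add_cancel finrank_pos]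
    exact hw
  · rintro _ ⟨a, rfl⟩
    refine Set.mem_iInter.2 fun m => ?_
    obtain ⟨b, hb⟩ := IsAlgClosed.exists_pow_nat_eq a (pow_pos (Fact.out : p.Prime).pos m)
    exact ⟨algebraMap F Z b, by simp only [← hb, map_pow]⟩
end

section
/- Let H be a finite dimensional Hopf algebra over a field F of characteristic p > dim H, acting inner faithfully on a finitely generated field extension Z of F with F algebraically closed, and suppose the Galois map image B ⊆ Z ⊗ H* is defined over F (i.e., B = Z ⊗ B₀ for a subalgebra B₀ ⊆ H*). Then B₀ = H* and H is cocommutative. -/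
/-!
Coassociativity of `ρ` gives `(id ⊗ Δ)(B) ⊆ Z ⊗ B₀ ⊗ B₀`, and since `1 ⊗ B₀ ⊆ B`, contracting the
factor `Z` along a functional with `φ 1 = 1` shows `Δ(B₀) ⊆ B₀ ⊗ B₀`. The linear endomorphisms of
`K` preserving `B₀` form a subalgebra of the finite-dimensional convolution algebra `End(K)`; a
finite-dimensional subalgebra is closed under inverses, so with `id` it contains the antipode. So `B₀` is a Hopf subalgebra and
inner faithfulness gives `B₀ = K`. Finally `B` is the image of the algebra map
`Z ⊗ Z → Z ⊗ K`, `z ⊗ z' ↦ (z ⊗ 1) ρ(z')`, so it is commutative; it contains `1 ⊗ K`.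
-/

open scoped TensorProduct

/-- A subalgebra `C` of a Hopf algebra `K` over `F` is a Hopf subalgebra if it is stable
under the comultiplication (`comul C ⊆ C ⊗ C`) and the antipode. -/
def IsHopfSubalgebra (F : Type*) [CommRing F] {K : Type*} [Ring K] [HopfAlgebra F K]
    (C : Subalgebra F K) : Prop :=
  (∀ b ∈ C, Coalgebra.comul (R := F) b ∈
    LinearMap.range (TensorProduct.map (Subalgebra.toSubmodule C).subtype
      (Subalgebra.toSubmodule C).subtype)) ∧
  (∀ b ∈ C, HopfAlgebra.antipode (R := F) b ∈ C)

open TensorProduct WithConv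

theorem Subalgebra.mem_of_mul_eq_one_of_mul_eq_one {F A : Type*} [Field F] [Ring A]
    [Algebra F A] [FiniteDimensional F A] (S : Subalgebra F A) {x y : A} (hx : x ∈ S)
    (hxy : x * y = 1) (hyx : y * x = 1) : y ∈ S := by
  have : IsArtinianRing S := IsArtinianRing.of_finite F S
  have hreg : IsRightRegular (⟨x, hx⟩ : S) := fun a b hab => by
    simpa [mul_assoc, hxy] using congrArg (fun c : S => (c : A) * y) hab
  obtain ⟨v, hv⟩ := (IsArtinianRing.isUnit_iff_isRightRegular.mpr hreg).exists_right_inv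
  have hxv : x * v = 1 := congrArg Subtype.val hv
  have hyv : y = v := by rw [← mul_one y, ← hxv, ← mul_assoc, hyx, one_mul]
  exact hyv ▸ v.2

section Contraction

variable {F Z M V : Type*} [Field F] [Ring Z] [Nontrivial Z] [Algebra F Z]
  [AddCommMonoid M] [Module F M] [AddCommMonoid V] [Module F V]

theorem mem_range_of_one_tmul_mem_range_lTensor {f : M →ₗ[F] V} {x : V}
    (h : (1 : Z) ⊗ₜ[F] x ∈ LinearMap.range (f.lTensor Z)) : x ∈ LinearMap.range f := by
  obtain ⟨φ, hφ⟩ := (Algebra.linearMap F Z).exists_leftInverse_of_injective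
    (LinearMap.ker_eq_bot.mpr (algebraMap F Z).injective)
  have hφ1 : φ 1 = 1 := by simpa using LinearMap.congr_fun hφ 1
  have contract_lTensor : ∀ t, f (TensorProduct.lid F M (φ.rTensor M t)) =
      TensorProduct.lid F V (φ.rTensor V (f.lTensor Z t)) := by
    intro t
    induction t using TensorProduct.induction_on with
    | zero => simp
    | tmul z m => simp
    | add u v hu hv => simp only [map_add, hu, hv]
  obtain ⟨t, ht⟩ := h
  refine ⟨TensorProduct.lid F M (φ.rTensor M t), ?_⟩
  rw [contract_lTensor, ht]
  simp [hφ1]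

end Contraction

theorem tmul_one_mul_mem_range_lTensor {F Z A M : Type*} [CommRing F] [Semiring Z] [Algebra F Z]
    [Semiring A] [Algebra F A] [AddCommMonoid M] [Module F M] (f : M →ₗ[F] A) (z : Z)
    {u : Z ⊗[F] A} (hu : u ∈ LinearMap.range (f.lTensor Z)) :
    (z ⊗ₜ[F] (1 : A)) * u ∈ LinearMap.range (f.lTensor Z) := by
  obtain ⟨t, rfl⟩ := hu
  induction t using TensorProduct.induction_on with
  | zero => simp
  | tmul z' m => exact ⟨(z * z') ⊗ₜ m, by simp⟩
  | add u v hu hv => rw [map_add, mul_add]; exact add_mem hu hv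

section GaloisMap

variable {F Z K : Type*} [CommRing F] [CommRing Z] [Algebra F Z] [Ring K] [Algebra F K]

/-- The Galois map, taken over `F` instead of over the invariants `Z^H`; its image is the same. -/
def galoisMap (ρ : Z →ₐ[F] Z ⊗[F] K) : Z ⊗[F] Z →ₐ[F] Z ⊗[F] K :=
  Algebra.TensorProduct.lift Algebra.TensorProduct.includeLeft ρ fun z _ =>
    Algebra.commutes (R := Z) z _

theorem galoisMap_tmul (ρ : Z →ₐ[F] Z ⊗[F] K) (z z' : Z) :
    galoisMap ρ (z ⊗ₜ z') = (z ⊗ₜ[F] (1 : K)) * ρ z' := rfl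

theorem range_galoisMap (ρ : Z →ₐ[F] Z ⊗[F] K) :
    LinearMap.range (galoisMap ρ).toLinearMap =
      Submodule.span F {w : Z ⊗[F] K | ∃ z z' : Z, w = (z ⊗ₜ[F] (1 : K)) * ρ z'} := by
  rw [← Submodule.map_top, ← TensorProduct.span_tmul_eq_top, Submodule.map_span]
  congr 1
  ext w
  simp [galoisMap_tmul, eq_comm]

theorem apply_mem_range_galoisMap (ρ : Z →ₐ[F] Z ⊗[F] K) (z : Z) :
    ρ z ∈ LinearMap.range (galoisMap ρ).toLinearMap :=
  ⟨1 ⊗ₜ z, by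
    rw [AlgHom.toLinearMap_apply, galoisMap_tmul, ← Algebra.TensorProduct.one_def, one_mul]⟩

theorem commute_of_mem_range_galoisMap (ρ : Z →ₐ[F] Z ⊗[F] K) {x y : Z ⊗[F] K}
    (hx : x ∈ LinearMap.range (galoisMap ρ).toLinearMap)
    (hy : y ∈ LinearMap.range (galoisMap ρ).toLinearMap) : Commute x y := by
  obtain ⟨a, rfl⟩ := hx
  obtain ⟨b, rfl⟩ := hy
  exact (Commute.all a b).map (galoisMap ρ)

end GaloisMap

section Coassociativity

variable {F Z K : Type*} [CommRing F] [AddCommMonoid Z] [Module F Z] [AddCommMonoid K]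
  [Module F K]

theorem assoc_rTensor_mem_range_lTensor_mapIncl (σ : Z →ₗ[F] Z ⊗[F] K) {C : Submodule F K}
    (hσ : ∀ z, σ z ∈ LinearMap.range (C.subtype.lTensor Z)) {t : Z ⊗[F] K}
    (ht : t ∈ LinearMap.range (C.subtype.lTensor Z)) :
    TensorProduct.assoc F Z K K (σ.rTensor K t) ∈ LinearMap.range ((mapIncl C C).lTensor Z) := by
  obtain ⟨t, rfl⟩ := ht
  induction t using TensorProduct.induction_on with
  | zero => simp
  | tmul z c =>
    obtain ⟨s, hs⟩ := hσ z
    refine ⟨TensorProduct.assoc F Z C C (s ⊗ₜ c), ?_⟩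
    have := LinearMap.congr_fun
      (map_map_comp_assoc_eq (LinearMap.id : Z →ₗ[F] Z) C.subtype C.subtype) (s ⊗ₜ c)
    rw [LinearMap.lTensor_tmul, LinearMap.rTensor_tmul, ← hs]
    exact this
  | add u v hu hv => simp only [map_add]; exact add_mem hu hv

theorem lTensor_comul_mem_range_of_coassoc [CoalgebraStruct F K] (ρ : Z →ₗ[F] Z ⊗[F] K)
    (hcoassoc : ∀ z : Z, (TensorProduct.map ρ LinearMap.id) (ρ z) =
      (TensorProduct.assoc F Z K K).symm
        ((TensorProduct.map LinearMap.id (Coalgebra.comul (R := F))) (ρ z)))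
    {C : Submodule F K} (hρ : ∀ z, ρ z ∈ LinearMap.range (C.subtype.lTensor Z)) (z : Z) :
    (Coalgebra.comul (R := F) (A := K)).lTensor Z (ρ z) ∈
      LinearMap.range ((mapIncl C C).lTensor Z) := by
  have h := assoc_rTensor_mem_range_lTensor_mapIncl ρ hρ (hρ z)
  rwa [LinearMap.rTensor, hcoassoc, LinearEquiv.apply_symm_apply] at h

end Coassociativity

theorem lTensor_comul_mul {F Z K : Type*} [CommRing F] [Semiring Z] [Algebra F Z] [Semiring K]
    [Bialgebra F K] (x y : Z ⊗[F] K) :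
    (Coalgebra.comul (R := F) (A := K)).lTensor Z (x * y) =
      (Coalgebra.comul (R := F) (A := K)).lTensor Z x *
        (Coalgebra.comul (R := F) (A := K)).lTensor Z y :=
  map_mul (Algebra.TensorProduct.map (AlgHom.id F Z) (Bialgebra.comulAlgHom F K)) x y

theorem comul_mem_of_range_galoisMap_eq {F Z K : Type*} [Field F] [Field Z] [Algebra F Z]
    [Ring K] [Bialgebra F K] (ρ : Z →ₐ[F] Z ⊗[F] K)
    (hcoassoc : ∀ z : Z, (TensorProduct.map ρ.toLinearMap LinearMap.id) (ρ z) =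
      (TensorProduct.assoc F Z K K).symm
        ((TensorProduct.map LinearMap.id (Coalgebra.comul (R := F))) (ρ z)))
    {C : Submodule F K} (hB : LinearMap.range (galoisMap ρ).toLinearMap =
      LinearMap.range (C.subtype.lTensor Z)) {b : K} (hb : b ∈ C) :
    Coalgebra.comul (R := F) b ∈ LinearMap.range (mapIncl C C) := by
  have hρ : ∀ z, ρ z ∈ LinearMap.range (C.subtype.lTensor Z) := fun z =>
    hB ▸ apply_mem_range_galoisMap ρ z
  have hcomul_image : ∀ u ∈ LinearMap.range (galoisMap ρ).toLinearMap,
      (Coalgebra.comul (R := F) (A := K)).lTensor Z u ∈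
        LinearMap.range ((mapIncl C C).lTensor Z) := by
    rintro _ ⟨t, rfl⟩
    induction t using TensorProduct.induction_on with
    | zero => simp
    | tmul z z' =>
      rw [AlgHom.toLinearMap_apply, galoisMap_tmul, lTensor_comul_mul, LinearMap.lTensor_tmul,
        Bialgebra.comul_one]
      exact tmul_one_mul_mem_range_lTensor _ z
        (lTensor_comul_mem_range_of_coassoc ρ.toLinearMap hcoassoc hρ z')
    | add u v hu hv => simp only [map_add]; exact add_mem hu hv
  refine mem_range_of_one_tmul_mem_range_lTensor (Z := Z) (f := mapIncl C C) ?_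
  have h1b : (1 : Z) ⊗ₜ[F] b ∈ LinearMap.range (galoisMap ρ).toLinearMap :=
    hB ▸ ⟨1 ⊗ₜ ⟨b, hb⟩, rfl⟩
  simpa using hcomul_image _ h1b

section HopfSubalgebra

variable {F K : Type*} [Field F] [Ring K] [HopfAlgebra F K]

def convStabilizer (C : Subalgebra F K)
    (hC : ∀ b ∈ C, Coalgebra.comul (R := F) b ∈
      LinearMap.range (mapIncl (Subalgebra.toSubmodule C) (Subalgebra.toSubmodule C))) :
    Subalgebra F (WithConv (K →ₗ[F] K)) where
  carrier := {f | ∀ c ∈ C, f c ∈ C}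
  mul_mem' {f g} hf hg c hc := by
    obtain ⟨t, ht⟩ := hC c hc
    rw [LinearMap.convMul_apply, ← ht]
    clear ht
    induction t using TensorProduct.induction_on with
    | zero => simp
    | tmul x y => simpa using C.mul_mem (hf x x.2) (hg y y.2)
    | add u v hu hv => simp only [map_add]; exact C.add_mem hu hv
  add_mem' hf hg c hc := C.add_mem (hf c hc) (hg c hc)
  algebraMap_mem' r c _ := by
    simpa using C.smul_mem (C.algebraMap_mem (Coalgebra.counit (R := F) c)) r

theorem isHopfSubalgebra_of_comul_mem [FiniteDimensional F K] (C : Subalgebra F K)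
    (hC : ∀ b ∈ C, Coalgebra.comul (R := F) b ∈
      LinearMap.range (mapIncl (Subalgebra.toSubmodule C) (Subalgebra.toSubmodule C))) :
    IsHopfSubalgebra F C := by
  have : FiniteDimensional F (WithConv (K →ₗ[F] K)) :=
    Module.Finite.equiv (WithConv.linearEquiv F _).symm
  have hS : toConv (HopfAlgebra.antipode F) ∈ convStabilizer C hC :=
    (convStabilizer C hC).mem_of_mul_eq_one_of_mul_eq_one (x := toConv LinearMap.id)
      (fun _ hc => hc) LinearMap.id_mul_antipode LinearMap.antipode_mul_id
  exact ⟨hC, hS⟩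

end HopfSubalgebra

theorem stmt12_general (F : Type*) [Field F] (Z : Type*) [Field Z] [Algebra F Z]
    (K : Type*) [Ring K] [HopfAlgebra F K] [FiniteDimensional F K]
    (ρ : Z →ₐ[F] Z ⊗[F] K)
    (hcoassoc : ∀ z : Z,
      (TensorProduct.map ρ.toLinearMap LinearMap.id) (ρ z) =
      (TensorProduct.assoc F Z K K).symm
        ((TensorProduct.map LinearMap.id (Coalgebra.comul (R := F))) (ρ z)))
    (hif : ∀ C : Subalgebra F K, IsHopfSubalgebra F C →
      (∀ z : Z, ρ z ∈ LinearMap.range (TensorProduct.map (LinearMap.id : Z →ₗ[F] Z)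
        (Subalgebra.toSubmodule C).subtype)) → C = ⊤)
    (B₀ : Subalgebra F K)
    (hB : Submodule.span F {w : Z ⊗[F] K | ∃ z z' : Z, w = (z ⊗ₜ[F] (1 : K)) * ρ z'} =
      LinearMap.range (TensorProduct.map (LinearMap.id : Z →ₗ[F] Z)
        (Subalgebra.toSubmodule B₀).subtype)) :
    B₀ = ⊤ ∧ ∀ a b : K, a * b = b * a := by
  rw [← range_galoisMap] at hB
  have htop : B₀ = ⊤ :=
    hif B₀ (isHopfSubalgebra_of_comul_mem B₀ fun _ hb =>
        comul_mem_of_range_galoisMap_eq ρ hcoassoc hB hb)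
      fun z => hB ▸ apply_mem_range_galoisMap ρ z
  refine ⟨htop, fun a b => ?_⟩
  have hmem : ∀ x : K, (1 : Z) ⊗ₜ[F] x ∈ LinearMap.range (galoisMap ρ).toLinearMap := fun x =>
    hB ▸ ⟨1 ⊗ₜ ⟨x, htop ▸ Algebra.mem_top (R := F)⟩, rfl⟩
  have h := (commute_of_mem_range_galoisMap ρ (hmem a) (hmem b)).eq
  rw [Algebra.TensorProduct.tmul_mul_tmul, Algebra.TensorProduct.tmul_mul_tmul, one_mul] at h
  exact Algebra.TensorProduct.includeRight_injective (algebraMap F Z).injective h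

/-- Lemma (fieldofdef), in dual (comodule) form.  Let `K = H*` be a finite dimensional Hopf
algebra over an algebraically closed field `F` of characteristic `p > dim H`, coacting on a
finitely generated field extension `Z` of `F` via `ρ : Z → Z ⊗ K`, inner faithfully (no
proper Hopf subalgebra `C ⊊ K` satisfies `ρ(Z) ⊆ Z ⊗ C`).  If the image `B` of the Galois
map is defined over `F`, i.e. `B = Z ⊗ B₀` for a subalgebra `B₀ ⊆ K`, then `B₀ = K` and
`K = H*` is commutative, i.e. `H` is cocommutative. -/
theorem stmt12 (F : Type*) [Field F] [IsAlgClosed F] (Z : Type*) [Field Z] [Algebra F Z]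
    (p : ℕ) [Fact p.Prime] [CharP F p]
    (hfg : ∃ s : Finset Z, IntermediateField.adjoin F (s : Set Z) = ⊤)
    (K : Type*) [Ring K] [HopfAlgebra F K] [FiniteDimensional F K]
    (hp : Module.finrank F K < p)
    (ρ : Z →ₐ[F] Z ⊗[F] K)
    (hcounit : ∀ z : Z, (TensorProduct.rid F Z)
      ((TensorProduct.map LinearMap.id (Coalgebra.counit (R := F))) (ρ z)) = z)
    (hcoassoc : ∀ z : Z,
      (TensorProduct.map ρ.toLinearMap LinearMap.id) (ρ z) =
      (TensorProduct.assoc F Z K K).symm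
        ((TensorProduct.map LinearMap.id (Coalgebra.comul (R := F))) (ρ z)))
    (hif : ∀ C : Subalgebra F K, IsHopfSubalgebra F C →
      (∀ z : Z, ρ z ∈ LinearMap.range (TensorProduct.map (LinearMap.id : Z →ₗ[F] Z)
        (Subalgebra.toSubmodule C).subtype)) → C = ⊤)
    (B₀ : Subalgebra F K)
    (hB : Submodule.span F {w : Z ⊗[F] K | ∃ z z' : Z, w = (z ⊗ₜ[F] (1 : K)) * ρ z'} =
      LinearMap.range (TensorProduct.map (LinearMap.id : Z →ₗ[F] Z)
        (Subalgebra.toSubmodule B₀).subtype)) :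
    B₀ = ⊤ ∧ ∀ a b : K, a * b = b * a :=
  stmt12_general F Z K ρ hcoassoc hif B₀ hB
end
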